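/- Let X := [-1,1]^d and P be a probability measure on X × {-1,1} with fixed posterior version η. Assume Δ_η controls the noise from below with exponent γ ∈ [0,∞) and constant c_LC, and fix r > 0 and the set F_r. Let L be the classification loss and f*_{L,P} a fixed Bayes decision function. Then for all measurable f : X → {-1,1} one has E_P(L_{F_r}∘f − L_{F_r}∘f*_{L,P})² ≤ (c_LC / r^γ) · E_P(L_{F_r}∘f − L_{F_r}∘f*_{L,P}). -/

import Mathlib

open MeasureTheory Set Metric
open scoped Classical ENNReal NNReal

noncomputable section

namespace RefinedMargin

abbrev Pt (d : ℕ) := Fin d → ℝ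

/-- The input space `X = [-1,1]^d` (with the supremum norm coming from `Fin d → ℝ`). -/
def cubeX (d : ℕ) : Set (Pt d) := Set.Icc (fun _ => (-1 : ℝ)) (fun _ => (1 : ℝ))

variable {d : ℕ} {s : ℝ}

/-- `X_1 = {x ∈ X : η x > 1/2}`. -/
def X1 (η : Pt d → ℝ) : Set (Pt d) := {x | x ∈ cubeX d ∧ 1 / 2 < η x}

/-- `X_{-1} = {x ∈ X : η x < 1/2}`. -/
def Xm1 (η : Pt d → ℝ) : Set (Pt d) := {x | x ∈ cubeX d ∧ η x < 1 / 2}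

/-- `X_0 = {x ∈ X : η x = 1/2}`. -/
def X0 (η : Pt d → ℝ) : Set (Pt d) := {x | x ∈ cubeX d ∧ η x = 1 / 2}

/-- Distance to the decision boundary. -/
def Δ (η : Pt d → ℝ) (x : Pt d) : ℝ :=
  if x ∈ Xm1 η then Metric.infDist x (X1 η)
  else if x ∈ X1 η then Metric.infDist x (Xm1 η)
  else 0

/-- Relative boundary of `T` in `X`. -/
def relBoundary (X T : Set (Pt d)) : Set (Pt d) := closure T ∩ closure (X \ T) ∩ X

/-- `T` is `m`-rectifiable: the image of a bounded subset of `ℝ^m` under a Lipschitz map. -/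
def IsRectifiable (m : ℕ) (T : Set (Pt d)) : Prop :=
  ∃ (B : Set (Fin m → ℝ)) (g : (Fin m → ℝ) → Pt d) (K : NNReal),
    Bornology.IsBounded B ∧ LipschitzOnWith K g B ∧ g '' B = T

/-- Margin exponent `α` with constant `cME`. -/
def HasME (μ : Measure (Pt d)) (η : Pt d → ℝ) (α cME : ℝ) : Prop :=
  ∀ t : ℝ, 0 < t → μ {x | Δ η x < t} ≤ ENNReal.ofReal ((cME * t) ^ α)

/-- Margin-noise exponent `β` with constant `cMNE`. -/
def HasMNE (μ : Measure (Pt d)) (η : Pt d → ℝ) (β cMNE : ℝ) : Prop :=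
  ∀ t : ℝ, 0 < t → (∫ x in {x | Δ η x < t}, |2 * η x - 1| ∂μ) ≤ (cMNE * t) ^ β

/-- The distance to the decision boundary controls the noise from below with
exponent `γ` and constant `cLC`. -/
def LowerControl (μ : Measure (Pt d)) (η : Pt d → ℝ) (γ cLC : ℝ) : Prop :=
  ∀ᵐ x ∂μ, Δ η x ^ γ ≤ cLC * |2 * η x - 1|

/-- A partition of `ℝ^d` into (half-open) cubes of side length `s`. -/
structure CubePartition (d : ℕ) (s : ℝ) where
  cell : ℕ → Set (Pt d)
  isCube : ∀ j, ∃ a : Pt d, cell j = {x | ∀ i, a i ≤ x i ∧ x i < a i + s}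
  covers : ∀ x : Pt d, ∃! j, x ∈ cell j

namespace CubePartition

/-- Index of the unique cell containing `x`. -/
def idx (𝒜 : CubePartition d s) (x : Pt d) : ℕ := (𝒜.covers x).choose

/-- The unique cell `A(x)` containing `x`. -/
def cellOf (𝒜 : CubePartition d s) (x : Pt d) : Set (Pt d) := 𝒜.cell (𝒜.idx x)

/-- Indices of cells intersecting `X`. -/
def J (𝒜 : CubePartition d s) : Set ℕ := {j | (𝒜.cell j ∩ cubeX d).Nonempty}

/-- Indices of cells near the decision boundary. -/
def JN (𝒜 : CubePartition d s) (η : Pt d → ℝ) (r : ℝ) : Set ℕ :=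
  {j | j ∈ 𝒜.J ∧ ∀ x ∈ 𝒜.cell j ∩ cubeX d, Δ η x ≤ 3 * r}

/-- Indices of cells far from the decision boundary. -/
def JF (𝒜 : CubePartition d s) (η : Pt d → ℝ) (r : ℝ) : Set ℕ :=
  {j | j ∈ 𝒜.J ∧ ∀ x ∈ 𝒜.cell j ∩ cubeX d, r ≤ Δ η x}

/-- `N_r`, the union of the cells near the decision boundary. -/
def Nr (𝒜 : CubePartition d s) (η : Pt d → ℝ) (r : ℝ) : Set (Pt d) := ⋃ j ∈ 𝒜.JN η r, 𝒜.cell j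

/-- `F_r`, the union of the cells far from the decision boundary. -/
def Fr (𝒜 : CubePartition d s) (η : Pt d → ℝ) (r : ℝ) : Set (Pt d) := ⋃ j ∈ 𝒜.JF η r, 𝒜.cell j

end CubePartition

/-- `sign` with the convention `sign 0 = 1`. -/
def sgn (t : ℝ) : ℝ := if 0 ≤ t then 1 else -1

/-- The classification loss `L(y,t) = 1_{(-∞,0]}(y · sign t)`. -/
def cLoss (y t : ℝ) : ℝ := if y * sgn t ≤ 0 then 1 else 0

/-- The restricted classification loss `L_T(x,y,t) = 1_T(x) L(y,t)`. -/
def rLoss (T : Set (Pt d)) (x : Pt d) (y t : ℝ) : ℝ := if x ∈ T then cLoss y t else 0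

/-- The joint distribution `P` on `X × {-1,1} ⊆ ℝ^d × ℝ` built from the marginal `μ = P_X`
and the posterior probability `η`. -/
def joint (μ : Measure (Pt d)) (η : Pt d → ℝ) : Measure (Pt d × ℝ) :=
  μ.bind fun x =>
    ENNReal.ofReal (η x) • Measure.dirac (x, 1) + ENNReal.ofReal (1 - η x) • Measure.dirac (x, -1)

/-- The risk `R_{L_T,P}(f)`. -/
def risk (P : Measure (Pt d × ℝ)) (T : Set (Pt d)) (f : Pt d → ℝ) : ℝ :=
  ∫ z, rLoss T z.1 z.2 (f z.1) ∂P

/-- The Bayes risk `R*_{L_T,P}`, the infimum over all measurable functions. -/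
def bayesRisk (P : Measure (Pt d × ℝ)) (T : Set (Pt d)) : ℝ :=
  ⨅ f : { f : Pt d → ℝ // Measurable f }, risk P T f.1

/-- The Bayes decision function `sign (2η - 1)`. -/
def bayesF (η : Pt d → ℝ) (x : Pt d) : ℝ := sgn (2 * η x - 1)

/-- The empirical risk of `f` on the dataset `D` for the restricted loss `L_T`. -/
def empRisk {n : ℕ} (D : Fin n → Pt d × ℝ) (T : Set (Pt d)) (f : Pt d → ℝ) : ℝ :=
  (∑ i, rLoss T (D i).1 (D i).2 (f (D i).1)) / (n : ℝ)

/-- `f_{D,s}`. -/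
def fHat (𝒜 : CubePartition d s) {n : ℕ} (D : Fin n → Pt d × ℝ) (x : Pt d) : ℝ :=
  ((∑ i, if (D i).2 = 1 ∧ (D i).1 ∈ 𝒜.cellOf x then (1 : ℝ) else 0) -
      ∑ i, if (D i).2 = -1 ∧ (D i).1 ∈ 𝒜.cellOf x then (1 : ℝ) else 0) / (n : ℝ)

/-- The empirical histogram rule `h_{D,s} = sign f_{D,s}`. -/
def histRule (𝒜 : CubePartition d s) {n : ℕ} (D : Fin n → Pt d × ℝ) (x : Pt d) : ℝ :=
  sgn (fHat 𝒜 D x)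

/-- `f_{P,s}`. -/
def fBar (𝒜 : CubePartition d s) (P : Measure (Pt d × ℝ)) (x : Pt d) : ℝ :=
  (P (𝒜.cellOf x ×ˢ ({1} : Set ℝ))).toReal - (P (𝒜.cellOf x ×ˢ ({-1} : Set ℝ))).toReal

/-- The infinite-sample histogram rule `h_{P,s} = sign f_{P,s}`. -/
def histRuleP (𝒜 : CubePartition d s) (P : Measure (Pt d × ℝ)) (x : Pt d) : ℝ :=
  sgn (fBar 𝒜 P x)

/-- The class `𝓕` of `±1`-valued functions which are constant on the cells meeting `X`
(and `0` elsewhere). -/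
def histClass (𝒜 : CubePartition d s) : Set (Pt d → ℝ) :=
  {f | ∃ c : ℕ → ℝ, (∀ j, c j = 1 ∨ c j = -1) ∧
    ∀ x, f x = if 𝒜.idx x ∈ 𝒜.J then c (𝒜.idx x) else 0}

/-- The `n`-fold product measure `P^n`. -/
def Pn (μ : Measure (Pt d)) (η : Pt d → ℝ) (n : ℕ) : Measure (Fin n → Pt d × ℝ) :=
  Measure.pi fun _ => joint μ η

/-!
Conditionally on `x`, the excess loss `G = L_{F_r} ∘ f - L_{F_r} ∘ f*` vanishes unless `x ∈ F_r`
and `f` disagrees with the Bayes rule at `x`. In that case `G(x, 1) = -G(x, -1) = ±1`, so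
`E[G² | x] = 1` while `E[G | x] = |2η(x) - 1|`. On `F_r` we have `r ≤ Δ_η(x)`, so lower control
gives `1 ≤ (c_LC / r^γ) |2η(x) - 1|`, i.e. `E[G² | x] ≤ (c_LC / r^γ) E[G | x]`; integrating
against `P_X` gives the claim.
-/

open ProbabilityTheory

section LabelKernel

variable {α : Type*} [MeasurableSpace α] {p : α → ℝ}

def labelKernel (p : α → ℝ) (hp : Measurable p) : Kernel α (α × ℝ) where
  toFun x :=
    ENNReal.ofReal (p x) • Measure.dirac (x, 1) + ENNReal.ofReal (1 - p x) • Measure.dirac (x, -1)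
  measurable' := by
    refine Measure.measurable_of_measurable_coe _ fun t ht => ?_
    simp only [Measure.coe_add, Pi.add_apply, Measure.smul_apply, smul_eq_mul,
      Measure.dirac_apply' _ ht]
    exact ((ENNReal.measurable_ofReal.comp hp).mul
        ((measurable_one.indicator ht).comp (measurable_id.prodMk measurable_const))).add
      ((ENNReal.measurable_ofReal.comp (measurable_const.sub hp)).mul
        ((measurable_one.indicator ht).comp (measurable_id.prodMk measurable_const)))

lemma isMarkovKernel_labelKernel (hp : Measurable p) (hp01 : ∀ x, p x ∈ Icc (0 : ℝ) 1) :
    IsMarkovKernel (labelKernel p hp) where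
  isProbabilityMeasure x := by
    constructor
    simp only [labelKernel, Kernel.coe_mk, Measure.add_apply, Measure.smul_apply, smul_eq_mul,
      measure_univ, mul_one]
    rw [← ENNReal.ofReal_add (hp01 x).1 (sub_nonneg.2 (hp01 x).2), add_sub_cancel,
      ENNReal.ofReal_one]

lemma integral_labelKernel (hp : Measurable p) {x : α} (hpx : p x ∈ Icc (0 : ℝ) 1)
    {h : α × ℝ → ℝ} (hh : Measurable h) :
    ∫ z, h z ∂labelKernel p hp x = p x * h (x, 1) + (1 - p x) * h (x, -1) := by
  have hint : ∀ y : ℝ, ∀ c : ℝ≥0∞, c ≠ ⊤ → Integrable h (c • Measure.dirac (x, y)) :=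
    fun y c hc => (integrable_dirac' hh.stronglyMeasurable enorm_lt_top).smul_measure hc
  simp only [labelKernel, Kernel.coe_mk]
  rw [integral_add_measure (hint _ _ ENNReal.ofReal_ne_top) (hint _ _ ENNReal.ofReal_ne_top),
    integral_smul_measure, integral_smul_measure, integral_dirac' _ _ hh.stronglyMeasurable,
    integral_dirac' _ _ hh.stronglyMeasurable, ENNReal.toReal_ofReal hpx.1,
    ENNReal.toReal_ofReal (sub_nonneg.2 hpx.2), smul_eq_mul, smul_eq_mul]

end LabelKernel

section Joint

variable {d : ℕ} {μ : Measure (Pt d)} {η : Pt d → ℝ}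

lemma joint_eq_comp (hη : Measurable η) : joint μ η = labelKernel η hη ∘ₘ μ := rfl

lemma isProbabilityMeasure_joint (μ : Measure (Pt d)) [IsProbabilityMeasure μ]
    (hη01 : ∀ x, η x ∈ Icc (0 : ℝ) 1) (hη : Measurable η) : IsProbabilityMeasure (joint μ η) := by
  have := isMarkovKernel_labelKernel hη hη01
  rw [joint_eq_comp hη]
  infer_instance

lemma integral_joint (hη01 : ∀ x, η x ∈ Icc (0 : ℝ) 1) (hη : Measurable η)
    {h : Pt d × ℝ → ℝ} (hh : Measurable h) (hint : Integrable h (joint μ η)) :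
    ∫ z, h z ∂joint μ η = ∫ x, (η x * h (x, 1) + (1 - η x) * h (x, -1)) ∂μ := by
  rw [joint_eq_comp hη, Measure.comp_eq_comp_const_apply] at hint ⊢
  rw [Kernel.integral_comp hint]
  simp only [Kernel.const_apply, integral_labelKernel hη (hη01 _) hh]

lemma integral_sq_le_mul_integral_joint (hη01 : ∀ x, η x ∈ Icc (0 : ℝ) 1) (hη : Measurable η)
    {G : Pt d × ℝ → ℝ} (hG : Measurable G) (hGi : Integrable G (joint μ η))
    (hG2i : Integrable (fun z => G z ^ 2) (joint μ η)) (K : ℝ)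
    (hcond : ∀ᵐ x ∂μ, η x * G (x, 1) ^ 2 + (1 - η x) * G (x, -1) ^ 2 ≤
      K * (η x * G (x, 1) + (1 - η x) * G (x, -1))) :
    ∫ z, G z ^ 2 ∂joint μ η ≤ K * ∫ z, G z ∂joint μ η := by
  have hnonneg : 0 ≤ ∫ z, (K * G z - G z ^ 2) ∂joint μ η := by
    have hm : Measurable fun z => K * G z - G z ^ 2 := (hG.const_mul K).sub (hG.pow_const 2)
    have hi : Integrable (fun z => K * G z - G z ^ 2) (joint μ η) := (hGi.const_mul K).sub hG2i
    rw [integral_joint hη01 hη hm hi]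
    refine integral_nonneg_of_ae (hcond.mono fun x hx => ?_)
    simp only [Pi.zero_apply]
    linarith
  rw [integral_sub (hGi.const_mul K) hG2i, integral_const_mul] at hnonneg
  linarith

end Joint

lemma cond_excess_sq_le {e K : ℝ} (he : e ∈ Icc (0 : ℝ) 1) (hK : 1 ≤ K * |2 * e - 1|) (a : ℝ) :
    e * (cLoss 1 a - cLoss 1 (sgn (2 * e - 1))) ^ 2 +
        (1 - e) * (cLoss (-1) a - cLoss (-1) (sgn (2 * e - 1))) ^ 2 ≤
      K * (e * (cLoss 1 a - cLoss 1 (sgn (2 * e - 1))) +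
        (1 - e) * (cLoss (-1) a - cLoss (-1) (sgn (2 * e - 1)))) := by
  obtain ⟨he0, he1⟩ := he
  rcases le_or_gt 0 (2 * e - 1) with h | h
  · rw [abs_of_nonneg h] at hK
    simp only [cLoss, sgn, if_pos h]
    split_ifs <;> norm_num <;> linarith
  · rw [abs_of_neg h] at hK
    simp only [cLoss, sgn, if_neg h.not_ge]
    split_ifs <;> norm_num <;> linarith

section Pointwise

variable {d : ℕ}

lemma one_le_mul_abs_of_lowerControl {η : Pt d → ℝ} {x : Pt d} {γ cLC r : ℝ} (hγ : 0 ≤ γ)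
    (hr : 0 < r) (hΔ : r ≤ Δ η x) (hLC : Δ η x ^ γ ≤ cLC * |2 * η x - 1|) :
    1 ≤ cLC / r ^ γ * |2 * η x - 1| := by
  have hrγ : 0 < r ^ γ := Real.rpow_pos_of_pos hr γ
  rw [div_mul_eq_mul_div, le_div_iff₀ hrγ, one_mul]
  exact (Real.rpow_le_rpow hr.le hΔ hγ).trans hLC

lemma measurable_sgn : Measurable sgn :=
  Measurable.ite (measurableSet_le measurable_const measurable_id) measurable_const measurable_const

lemma measurable_bayesF {η : Pt d → ℝ} (hη : Measurable η) : Measurable (bayesF η) :=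
  measurable_sgn.comp ((measurable_const.mul hη).sub measurable_const)

lemma measurable_rLoss {T : Set (Pt d)} (hT : MeasurableSet T) {g : Pt d → ℝ}
    (hg : Measurable g) : Measurable fun z : Pt d × ℝ => rLoss T z.1 z.2 (g z.1) :=
  Measurable.ite (hT.preimage measurable_fst)
    (Measurable.ite (measurableSet_le (measurable_snd.mul
      (measurable_sgn.comp (hg.comp measurable_fst))) measurable_const)
      measurable_const measurable_const) measurable_const

lemma abs_rLoss_sub_rLoss_le_one (T : Set (Pt d)) (x : Pt d) (y a b : ℝ) :
    |rLoss T x y a - rLoss T x y b| ≤ 1 := by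
  simp only [rLoss, cLoss]
  split_ifs <;> norm_num

namespace CubePartition

variable {s : ℝ} (𝒜 : CubePartition d s)

lemma le_Δ_of_mem_Fr {η : Pt d → ℝ} {r : ℝ} {x : Pt d} (hxF : x ∈ 𝒜.Fr η r) (hxX : x ∈ cubeX d) :
    r ≤ Δ η x := by
  obtain ⟨j, hj, hxj⟩ := mem_iUnion₂.mp hxF
  exact hj.2 x ⟨hxj, hxX⟩

lemma measurableSet_cell (j : ℕ) : MeasurableSet (𝒜.cell j) := by
  obtain ⟨a, ha⟩ := 𝒜.isCube j
  rw [ha, show {x : Pt d | ∀ i, a i ≤ x i ∧ x i < a i + s} =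
      ⋂ i, ({x : Pt d | a i ≤ x i} ∩ {x : Pt d | x i < a i + s}) by
        ext x; simp [mem_iInter, forall_and]]
  exact MeasurableSet.iInter fun i =>
    (measurableSet_le measurable_const (measurable_pi_apply i)).inter
      (measurableSet_lt (measurable_pi_apply i) measurable_const)

lemma measurableSet_Fr (η : Pt d → ℝ) (r : ℝ) : MeasurableSet (𝒜.Fr η r) :=
  MeasurableSet.biUnion (to_countable _) fun j _ => 𝒜.measurableSet_cell j

end CubePartition

end Pointwise

theorem statement5_general (d : ℕ) (s : ℝ)
    (𝒜 : CubePartition d s)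
    (μ : Measure (Pt d)) [IsProbabilityMeasure μ] (hμX : μ (cubeX d)ᶜ = 0)
    (η : Pt d → ℝ) (hη : ∀ x, η x ∈ Set.Icc (0 : ℝ) 1) (hmeasη : Measurable η)
    (γ cLC : ℝ) (hγ : 0 ≤ γ) (hLC : LowerControl μ η γ cLC)
    (r : ℝ) (hr : 0 < r)
    (f : Pt d → ℝ) (hf : Measurable f) :
    (∫ z, (rLoss (𝒜.Fr η r) z.1 z.2 (f z.1) - rLoss (𝒜.Fr η r) z.1 z.2 (bayesF η z.1)) ^ 2
        ∂(joint μ η)) ≤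
      cLC / r ^ γ *
        ∫ z, (rLoss (𝒜.Fr η r) z.1 z.2 (f z.1) - rLoss (𝒜.Fr η r) z.1 z.2 (bayesF η z.1))
          ∂(joint μ η) := by
  have := isProbabilityMeasure_joint μ hη hmeasη
  set T := 𝒜.Fr η r
  set G : Pt d × ℝ → ℝ := fun z => rLoss T z.1 z.2 (f z.1) - rLoss T z.1 z.2 (bayesF η z.1)
  have hTm : MeasurableSet T := 𝒜.measurableSet_Fr η r
  have hGm : Measurable G := (measurable_rLoss hTm hf).sub
    (measurable_rLoss hTm (measurable_bayesF hmeasη))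
  have hG1 (z : Pt d × ℝ) : ‖G z‖ ≤ 1 := abs_rLoss_sub_rLoss_le_one T _ _ _ _
  have hGi : Integrable G (joint μ η) :=
    .of_bound hGm.aestronglyMeasurable 1 (ae_of_all _ hG1)
  have hG2i : Integrable (fun z => G z ^ 2) (joint μ η) :=
    .of_bound (hGm.pow_const 2).aestronglyMeasurable 1 (ae_of_all _ fun z => by
      simpa [abs_pow] using pow_le_one₀ (n := 2) (norm_nonneg _) (hG1 z))
  refine integral_sq_le_mul_integral_joint hη hmeasη hGm hGi hG2i _ ?_
  have hX : ∀ᵐ x ∂μ, x ∈ cubeX d := mem_ae_iff.2 hμX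
  filter_upwards [hLC, hX] with x hLCx hxX
  by_cases hxT : x ∈ T
  · simpa only [G, rLoss, if_pos hxT, bayesF] using cond_excess_sq_le (hη x)
      (one_le_mul_abs_of_lowerControl hγ hr (𝒜.le_Δ_of_mem_Fr hxT hxX) hLCx) (f x)
  · simp [G, rLoss, hxT]

theorem statement5 (d : ℕ) (hd : 1 ≤ d) (s : ℝ) (hs : s ∈ Set.Ioc (0 : ℝ) 1)
    (𝒜 : CubePartition d s)
    (μ : Measure (Pt d)) [IsProbabilityMeasure μ] (hμX : μ (cubeX d)ᶜ = 0)
    (η : Pt d → ℝ) (hη : ∀ x, η x ∈ Set.Icc (0 : ℝ) 1) (hmeasη : Measurable η)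
    (γ cLC : ℝ) (hγ : 0 ≤ γ) (hcLC : 0 < cLC) (hLC : LowerControl μ η γ cLC)
    (r : ℝ) (hr : 0 < r)
    (f : Pt d → ℝ) (hf : Measurable f) (hfpm : ∀ x, f x = 1 ∨ f x = -1) :
    (∫ z, (rLoss (𝒜.Fr η r) z.1 z.2 (f z.1) - rLoss (𝒜.Fr η r) z.1 z.2 (bayesF η z.1)) ^ 2
        ∂(joint μ η)) ≤
      cLC / r ^ γ *
        ∫ z, (rLoss (𝒜.Fr η r) z.1 z.2 (f z.1) - rLoss (𝒜.Fr η r) z.1 z.2 (bayesF η z.1))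
          ∂(joint μ η) :=
  statement5_general d s 𝒜 μ hμX η hη hmeasη γ cLC hγ hLC r hr f hf

end RefinedMargin
end
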